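/- arXiv:1805.12579 — 3 statements merged into one kernel-verified Lean document; each statement's English description precedes it below -/
import Mathlib

section
/- The real number ∛2 does not lie in any field extension of ℚ obtained by a finite tower of quadratic extensions; that is, if ℚ = F₀ ⊆ F₁ ⊆ ... ⊆ Fₙ ⊆ ℝ with [Fᵢ₊₁ : Fᵢ] = 2 for all i, then ∛2 ∉ Fₙ. -/
/-!
A tower of quadratic extensions of `ℚ` has degree `2 ^ n`, so every element of its top field has
a minimal polynomial whose degree divides `2 ^ n`. The minimal polynomial of `∛2` is `X ^ 3 - 2`,
irreducible because `2` is not a rational cube, and `3` does not divide `2 ^ n`.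
-/

open Polynomial IntermediateField Module

theorem Rat.pow_ne_prime {p n : ℕ} (hp : p.Prime) (hn : 1 < n) (q : ℚ) : q ^ n ≠ p := by
  have := Fact.mk hp
  intro h
  -- the `p`-adic valuation of `q ^ n` is a multiple of `n`, that of `p` is `1`
  have hval := congrArg (padicValRat p) h
  rw [padicValRat.pow, padicValRat.self hp.one_lt] at hval
  have := Int.le_of_dvd one_pos ⟨_, hval.symm⟩
  omega

theorem minpoly_eq_X_pow_sub_C_of_pow_eq_prime {A : Type*} [Ring A] [Nontrivial A] [Algebra ℚ A]
    {n p : ℕ} (hn : n.Prime) (hp : p.Prime) {x : A} (hx : x ^ n = p) :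
    minpoly ℚ x = X ^ n - C (p : ℚ) := by
  have hirr : Irreducible (X ^ n - C (p : ℚ)) :=
    X_pow_sub_C_irreducible_of_prime hn (Rat.pow_ne_prime hp hn.one_lt)
  refine (minpoly.eq_of_irreducible_of_monic hirr ?_ (monic_X_pow_sub_C _ hn.ne_zero)).symm
  simp [hx]

theorem natDegree_minpoly_dvd_finrank_of_mem {K L : Type*} [Field K] [Field L] [Algebra K L]
    {E : IntermediateField K L} [FiniteDimensional K E] {x : L} (hx : x ∈ E) :
    (minpoly K x).natDegree ∣ finrank K E := by
  rw [← IntermediateField.minpoly_eq ⟨x, hx⟩]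
  exact minpoly.degree_dvd (.of_finite K _)

theorem finrank_eq_pow_of_tower {K L : Type*} [Field K] [Field L] [Algebra K L] (d : ℕ)
    (F : ℕ → IntermediateField K L) (h0 : F 0 = ⊥) (hle : ∀ i, F i ≤ F (i + 1))
    (hdeg : ∀ i, finrank (F i) (extendScalars (hle i)) = d) (m : ℕ) :
    finrank K (F m) = d ^ m := by
  induction m with
  | zero => rw [h0, pow_zero, IntermediateField.finrank_bot]
  | succ i ih =>
    rw [← finrank_bot_mul_relfinrank (hle i), relfinrank_eq_finrank_of_le (hle i), hdeg, ih,
      pow_succ]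

theorem cbrt_two_not_in_quadratic_tower
    (n : ℕ) (F : ℕ → IntermediateField ℚ ℝ)
    (h0 : F 0 = ⊥)
    (hle : ∀ i, F i ≤ F (i + 1))
    (hdeg : ∀ i, Module.finrank (F i) (IntermediateField.extendScalars (hle i)) = 2) :
    (2 : ℝ) ^ ((1 : ℝ) / 3) ∉ F n := by
  intro hmem
  have hcube : ((2 : ℝ) ^ ((1 : ℝ) / 3)) ^ 3 = (2 : ℕ) := by
    rw [one_div]
    exact_mod_cast Real.rpow_inv_natCast_pow (by norm_num) (by norm_num)
  have hrank := finrank_eq_pow_of_tower 2 F h0 hle hdeg n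
  have : FiniteDimensional ℚ (F n) := .of_finrank_pos (by rw [hrank]; positivity)
  have hdvd := natDegree_minpoly_dvd_finrank_of_mem hmem
  rw [minpoly_eq_X_pow_sub_C_of_pow_eq_prime Nat.prime_three Nat.prime_two hcube,
    natDegree_X_pow_sub_C, hrank] at hdvd
  exact absurd (Nat.prime_three.dvd_of_dvd_pow hdvd) (by norm_num)
end

section
/- Four distinct points A, B, C, D in ℚ² in general position (no three collinear, no two of the six connecting lines parallel) generate, under straightedge-only derivability, a set of points that is dense in ℝ² (indeed equals all of ℚ²... precisely: every point of ℚ² is derivable from {A, B, C, D}). -/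
def lineThrough (a b : ℝ × ℝ) : Set (ℝ × ℝ) := {p | ∃ t : ℝ, p = a + t • (b - a)}

/-- Straightedge-only derivability. -/
inductive SDeriv (S : Set (ℝ × ℝ)) : ℝ × ℝ → Prop
  | base {p : ℝ × ℝ} : p ∈ S → SDeriv S p
  | inter {a b c d p : ℝ × ℝ} : SDeriv S a → SDeriv S b → SDeriv S c → SDeriv S d →
      a ≠ b → c ≠ d → lineThrough a b ≠ lineThrough c d →
      p ∈ lineThrough a b → p ∈ lineThrough c d → SDeriv S p

/-- Embedding of the rational plane into the real plane. -/
def emb (p : ℚ × ℚ) : ℝ × ℝ := ((p.1 : ℝ), (p.2 : ℝ))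

/-- Two nonzero direction vectors are parallel iff their cross product vanishes. -/
def QParallel (u v : ℚ × ℚ) : Prop := u.1 * v.2 - u.2 * v.1 = 0

/-!
Straightedge constructions are projective: in homogeneous coordinates the lines `ab` and `cd`
meet at `(a × b) × (c × d)`, and the only affine restriction is that no point of a construction
may lie on the line at infinity. The projective map sending the quadrangle `(0,0)`, `(1,0)`,
`(0,1)`, `(1,1)` to `A, B, C, D` pulls the line at infinity back to a line `ℓ = 0` which, by
general position, misses the quadrangle and its three diagonal points.

In the standard chart, `(x, y)` off `ℓ = 0` is constructible as soon as some constructed point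
has abscissa `x` and some has ordinate `y`. Since `ℓ = 0` meets each row and each column at most
once, a few constructions with case distinctions show that the abscissas are closed under
midpoints and doubling, hence contain `ℕ`, and so do the ordinates. Joining `(p, n)` to
`(q, n + 1)` and cutting with the row `n + s` then gives the abscissa `p + s (q - p)`, where `n`
is taken so large that the three points avoid `ℓ = 0`; this and a similar construction of `1 / g`
make the abscissas a subfield of `ℚ`. Points at infinity of the chart are then meets of the
line at infinity with lines through two affine points.
-/

open Matrix Filter

namespace Straightedge

/-! ### Vector identities -/

section CommRing

variable {K : Type*} [CommRing K]

lemma cross_vec3 (a₀ a₁ a₂ b₀ b₁ b₂ : K) :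
    ![a₀, a₁, a₂] ⨯₃ ![b₀, b₁, b₂] =
      ![a₁ * b₂ - a₂ * b₁, a₂ * b₀ - a₀ * b₂, a₀ * b₁ - a₁ * b₀] := rfl

lemma dotProduct_vec3 (ℓ : Fin 3 → K) (x y z : K) :
    ℓ ⬝ᵥ ![x, y, z] = ℓ 0 * x + ℓ 1 * y + ℓ 2 * z := by
  rw [vec3_dotProduct]
  simp

lemma mulVec_cross_mulVec (M : Matrix (Fin 3) (Fin 3) K) (a b : Fin 3 → K) :
    (M *ᵥ a) ⨯₃ (M *ᵥ b) = M.adjugateᵀ *ᵥ (a ⨯₃ b) := by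
  rw [adjugate_fin_three]
  ext i; fin_cases i <;> simp [cross_apply, mulVec, vec3_dotProduct] <;> ring

lemma mulVec_meet (M : Matrix (Fin 3) (Fin 3) K) (a b c d : Fin 3 → K) :
    (M *ᵥ a) ⨯₃ (M *ᵥ b) ⨯₃ ((M *ᵥ c) ⨯₃ (M *ᵥ d)) =
      M.det • M *ᵥ (a ⨯₃ b ⨯₃ (c ⨯₃ d)) := by
  rw [mulVec_cross_mulVec, mulVec_cross_mulVec, mulVec_cross_mulVec, adjugate_transpose,
    transpose_transpose, adjugate_adjugate _ (by simp), smul_mulVec]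
  simp

lemma cramer_fin_three (a b c d : Fin 3 → K) :
    (d ⬝ᵥ b ⨯₃ c) • a + (a ⬝ᵥ d ⨯₃ c) • b + (a ⬝ᵥ b ⨯₃ d) • c =
      (a ⬝ᵥ b ⨯₃ c) • d := by
  ext i; fin_cases i <;> simp [cross_apply, dotProduct, Fin.sum_univ_three] <;> ring

end CommRing

lemma eventually_mul_natCast_add_ne_zero {K : Type*} [Field K] [CharZero K] {a : K}
    (ha : a ≠ 0) (b : K) : ∀ᶠ n : ℕ in atTop, a * n + b ≠ 0 := by
  rw [← Nat.cofinite_eq_atTop]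
  refine Set.Subsingleton.finite (s := {n : ℕ | a * n + b = 0}) ?_ |>.eventually_cofinite_notMem
  intro m hm n hn
  exact_mod_cast mul_left_cancel₀ ha (add_right_cancel (hm.trans hn.symm))

/-! ### Lines through rational points -/

lemma emb_injective : Function.Injective emb := fun a b h => by
  simp only [emb, Prod.mk.injEq, Rat.cast_inj] at h
  exact Prod.ext h.1 h.2

lemma mem_lineThrough_iff {a b p : ℝ × ℝ} (hab : a ≠ b) :
    p ∈ lineThrough a b ↔ (p.1 - a.1) * (b.2 - a.2) = (p.2 - a.2) * (b.1 - a.1) := by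
  refine ⟨fun ⟨t, ht⟩ => by subst ht; simp; ring, fun h => ?_⟩
  have hn : (b.1 - a.1) ^ 2 + (b.2 - a.2) ^ 2 ≠ 0 := fun h0 =>
    hab (Prod.ext (by nlinarith) (by nlinarith))
  -- the parameter of the orthogonal projection of `p` to the line
  refine ⟨((p.1 - a.1) * (b.1 - a.1) + (p.2 - a.2) * (b.2 - a.2)) /
    ((b.1 - a.1) ^ 2 + (b.2 - a.2) ^ 2), ?_⟩
  ext <;> simp <;> field_simp
  · linear_combination (b.2 - a.2) * h
  · linear_combination -(b.1 - a.1) * h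

lemma emb_mem_lineThrough_iff {a b p : ℚ × ℚ} (hab : a ≠ b) :
    emb p ∈ lineThrough (emb a) (emb b) ↔
      (p.1 - a.1) * (b.2 - a.2) = (p.2 - a.2) * (b.1 - a.1) := by
  rw [mem_lineThrough_iff (emb_injective.ne hab)]
  simp only [emb]
  norm_cast

def hom (p : ℚ × ℚ) : Fin 3 → ℚ := ![p.1, p.2, 1]

/-- Junk (`(0, 0)`) when `w 2 = 0`. -/
def dehom (w : Fin 3 → ℚ) : ℚ × ℚ := (w 0 / w 2, w 1 / w 2)

lemma dehom_hom (p : ℚ × ℚ) : dehom (hom p) = p := by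
  simp [dehom, hom]

lemma dehom_smul {k : ℚ} (hk : k ≠ 0) (w : Fin 3 → ℚ) : dehom (k • w) = dehom w := by
  simp [dehom, mul_div_mul_left _ _ hk]

lemma cross_eq_zero_of_dehom_eq {a b : Fin 3 → ℚ} (ha : a 2 ≠ 0) (hb : b 2 ≠ 0)
    (h : dehom a = dehom b) : a ⨯₃ b = 0 := by
  obtain ⟨h0, h1⟩ := Prod.mk.inj h
  rw [div_eq_div_iff ha hb] at h0 h1
  have h2 : a 0 * b 1 - a 1 * b 0 = 0 :=
    mul_left_cancel₀ hb (by linear_combination b 1 * h0 - b 0 * h1)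
  rw [cross_apply]
  ext i; fin_cases i <;> simp
  · linear_combination h1
  · linear_combination -h0
  · linear_combination h2

lemma emb_dehom_mem_lineThrough_iff {a b z : Fin 3 → ℚ} (ha : a 2 ≠ 0) (hb : b 2 ≠ 0)
    (hz : z 2 ≠ 0) (hab : dehom a ≠ dehom b) :
    emb (dehom z) ∈ lineThrough (emb (dehom a)) (emb (dehom b)) ↔ z ⬝ᵥ a ⨯₃ b = 0 := by
  have key : (z 0 / z 2 - a 0 / a 2) * (b 1 / b 2 - a 1 / a 2) -
      (z 1 / z 2 - a 1 / a 2) * (b 0 / b 2 - a 0 / a 2) =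
        -(z ⬝ᵥ a ⨯₃ b) / (a 2 * b 2 * z 2) := by
    rw [vec3_dotProduct, cross_apply]
    field_simp
    simp
    ring
  rw [emb_mem_lineThrough_iff hab, ← sub_eq_zero]
  simp only [dehom]
  rw [key]
  simp [ha, hb, hz]

lemma dotProduct_cross_ne_zero_of_not_collinear {p q r : ℚ × ℚ}
    (h : ¬ Collinear ℝ {emb p, emb q, emb r}) (hqr : q ≠ r) :
    hom p ⬝ᵥ hom q ⨯₃ hom r ≠ 0 := by
  contrapose! h
  apply collinear_insert_of_mem_affineSpan_pair
  obtain ⟨t, ht⟩ := (emb_mem_lineThrough_iff (p := p) hqr).2 (by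
    simp [hom, cross_vec3] at h
    linear_combination -h)
  have := AffineMap.lineMap_mem_affineSpan_pair t (emb q) (emb r)
  rw [AffineMap.lineMap_apply] at this
  rw [ht]
  convert this using 1
  simp [add_comm]

lemma dotProduct_cross_ne_zero {S : Set (ℝ × ℝ)}
    (hS : ∀ s ⊆ S, s.ncard = 3 → ¬ Collinear ℝ s) {p q r : ℚ × ℚ} (hpq : p ≠ q)
    (hpr : p ≠ r) (hqr : q ≠ r) (hp : emb p ∈ S := by simp) (hq : emb q ∈ S := by simp)
    (hr : emb r ∈ S := by simp) : hom p ⬝ᵥ hom q ⨯₃ hom r ≠ 0 :=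
  dotProduct_cross_ne_zero_of_not_collinear (hS _ (by simp [Set.insert_subset_iff, hp, hq, hr])
    (Set.ncard_eq_three.2 ⟨_, _, _, emb_injective.ne hpq, emb_injective.ne hpr,
      emb_injective.ne hqr, rfl⟩)) hqr

/-! ### Sets of projective points closed under meets -/

/-- Sets of projective points in homogeneous coordinates: the lines `ab` and `cd` meet at
`(a × b) × (c × d)`. -/
structure IsMeetClosed {K : Type*} [Field K] (ℓ : Fin 3 → K) (R : (Fin 3 → K) → Prop) :
    Prop where
  dotProduct_ne_zero {e : Fin 3 → K} : R e → ℓ ⬝ᵥ e ≠ 0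
  smul_mem {e : Fin 3 → K} {k : K} : R e → k ≠ 0 → R (k • e)
  meet_mem {a b c d : Fin 3 → K} : R a → R b → R c → R d →
    ℓ ⬝ᵥ (a ⨯₃ b ⨯₃ (c ⨯₃ d)) ≠ 0 → R (a ⨯₃ b ⨯₃ (c ⨯₃ d))

namespace IsMeetClosed

variable {K : Type*} [Field K] {ℓ : Fin 3 → K} {R : (Fin 3 → K) → Prop}

lemma mem_of_meet_eq_smul (h : IsMeetClosed ℓ R) {a b c d z : Fin 3 → K} {k : K}
    (ha : R a) (hb : R b) (hc : R c) (hd : R d) (hz : a ⨯₃ b ⨯₃ (c ⨯₃ d) = k • z)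
    (hk : k ≠ 0) (hℓz : ℓ ⬝ᵥ z ≠ 0) : R z := by
  have := h.meet_mem ha hb hc hd (by
    rw [hz, dotProduct_smul, smul_eq_mul]
    exact mul_ne_zero hk hℓz)
  rw [hz] at this
  simpa [smul_smul, hk] using h.smul_mem this (inv_ne_zero hk)

lemma comp (h : IsMeetClosed ℓ R) (M : Matrix (Fin 3) (Fin 3) K) (hM : M.det ≠ 0) :
    IsMeetClosed (ℓ ᵥ* M) (fun e => R (M *ᵥ e)) where
  dotProduct_ne_zero he := by
    rw [← dotProduct_mulVec]
    exact h.dotProduct_ne_zero he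
  smul_mem he hk := by
    rw [mulVec_smul]
    exact h.smul_mem he hk
  meet_mem ha hb hc hd hz := by
    rw [← dotProduct_mulVec] at hz
    exact h.mem_of_meet_eq_smul ha hb hc hd (mulVec_meet M _ _ _ _) hM hz

end IsMeetClosed

def IsDerivableHom (S : Set (ℝ × ℝ)) (e : Fin 3 → ℚ) : Prop :=
  e 2 ≠ 0 ∧ SDeriv S (emb (dehom e))

lemma isDerivableHom_hom {S : Set (ℝ × ℝ)} {p : ℚ × ℚ} (hp : emb p ∈ S) :
    IsDerivableHom S (hom p) :=
  ⟨by simp [hom], by rw [dehom_hom]; exact SDeriv.base hp⟩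

lemma isMeetClosed_isDerivableHom (S : Set (ℝ × ℝ)) :
    IsMeetClosed ![0, 0, 1] (IsDerivableHom S) where
  dotProduct_ne_zero he := by simpa [dotProduct, Fin.sum_univ_three] using he.1
  smul_mem he hk := ⟨by simpa [hk] using he.1, by rw [dehom_smul hk]; exact he.2⟩
  meet_mem := by
    intro a b c d ⟨ha, da⟩ ⟨hb, db⟩ ⟨hc, dc⟩ ⟨hd, dd⟩ hz
    set z := a ⨯₃ b ⨯₃ (c ⨯₃ d)
    replace hz : z 2 ≠ 0 := by simpa [dotProduct, Fin.sum_univ_three] using hz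
    have hab : a ⨯₃ b ≠ 0 := fun h0 => hz (by simp [z, h0])
    have hcd : c ⨯₃ d ≠ 0 := fun h0 => hz (by simp [z, h0])
    have pab : dehom a ≠ dehom b := fun h0 => hab (cross_eq_zero_of_dehom_eq ha hb h0)
    have pcd : dehom c ≠ dehom d := fun h0 => hcd (cross_eq_zero_of_dehom_eq hc hd h0)
    have mem_ab {w} (hw : w 2 ≠ 0) := emb_dehom_mem_lineThrough_iff (z := w) ha hb hw pab
    have mem_cd {w} (hw : w 2 ≠ 0) := emb_dehom_mem_lineThrough_iff (z := w) hc hd hw pcd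
    refine ⟨hz, SDeriv.inter da db dc dd (emb_injective.ne pab) (emb_injective.ne pcd) ?_
      ((mem_ab hz).2 ?_) ((mem_cd hz).2 ?_)⟩
    · intro hline
      have hc' := (mem_ab hc).1 (hline ▸ ⟨0, by simp⟩)
      have hd' := (mem_ab hd).1 (hline ▸ ⟨1, by simp⟩)
      apply hz
      simp [z, cross_cross_eq_smul_sub_smul', dotProduct_comm _ d, hc', hd']
    · rw [dotProduct_comm]
      exact dot_self_cross _ _
    · rw [dotProduct_comm]
      exact dot_cross_self _ _

/-! ### The closure of the standard quadrangle -/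

/-- The last three fields say that `ℓ = 0` misses the diagonal points of the quadrangle. -/
structure FrameClosure (ℓ : Fin 3 → ℚ) (R : (Fin 3 → ℚ) → Prop) : Prop
    extends IsMeetClosed ℓ R where
  mem_origin : R ![0, 0, 1]
  mem_unitX : R ![1, 0, 1]
  mem_unitY : R ![0, 1, 1]
  mem_unitXY : R ![1, 1, 1]
  dotProduct_pointX_ne_zero : ℓ ⬝ᵥ ![1, 0, 0] ≠ 0
  dotProduct_pointY_ne_zero : ℓ ⬝ᵥ ![0, 1, 0] ≠ 0
  dotProduct_center_ne_zero : ℓ ⬝ᵥ ![1, 1, 2] ≠ 0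

def IsAbscissa (R : (Fin 3 → ℚ) → Prop) (x : ℚ) : Prop := ∃ y, R ![x, y, 1]

def IsOrdinate (R : (Fin 3 → ℚ) → Prop) (y : ℚ) : Prop := ∃ x, R ![x, y, 1]

def swapXY : Matrix (Fin 3) (Fin 3) ℚ := !![0, 1, 0; 1, 0, 0; 0, 0, 1]

lemma swapXY_mulVec (x y z : ℚ) : swapXY *ᵥ ![x, y, z] = ![y, x, z] := by
  ext i; fin_cases i <;> simp [swapXY, mulVec]

lemma isOrdinate_iff_isAbscissa_swapXY {R : (Fin 3 → ℚ) → Prop} {y : ℚ} :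
    IsOrdinate R y ↔ IsAbscissa (fun e => R (swapXY *ᵥ e)) y := by
  simp [IsOrdinate, IsAbscissa, swapXY_mulVec]

lemma isAbscissa_iff_isOrdinate_swapXY {R : (Fin 3 → ℚ) → Prop} {x : ℚ} :
    IsAbscissa R x ↔ IsOrdinate (fun e => R (swapXY *ᵥ e)) x := by
  simp [IsOrdinate, IsAbscissa, swapXY_mulVec]

namespace FrameClosure

variable {ℓ : Fin 3 → ℚ} {R : (Fin 3 → ℚ) → Prop} (h : FrameClosure ℓ R)
include h

lemma swap : FrameClosure (ℓ ᵥ* swapXY) (fun e => R (swapXY *ᵥ e)) where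
  toIsMeetClosed := h.comp swapXY (by simp [swapXY, det_fin_three])
  mem_origin := by simpa [swapXY_mulVec] using h.mem_origin
  mem_unitX := by simpa [swapXY_mulVec] using h.mem_unitY
  mem_unitY := by simpa [swapXY_mulVec] using h.mem_unitX
  mem_unitXY := by simpa [swapXY_mulVec] using h.mem_unitXY
  dotProduct_pointX_ne_zero := by
    simpa [← dotProduct_mulVec, swapXY_mulVec] using h.dotProduct_pointY_ne_zero
  dotProduct_pointY_ne_zero := by
    simpa [← dotProduct_mulVec, swapXY_mulVec] using h.dotProduct_pointX_ne_zero
  dotProduct_center_ne_zero := by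
    simpa [← dotProduct_mulVec, swapXY_mulVec] using h.dotProduct_center_ne_zero

lemma coeff_zero_ne_zero : ℓ 0 ≠ 0 := by
  simpa only [dotProduct_vec3, mul_one, mul_zero, add_zero] using h.dotProduct_pointX_ne_zero

lemma coeff_one_ne_zero : ℓ 1 ≠ 0 := by
  simpa only [dotProduct_vec3, mul_one, mul_zero, add_zero, zero_add] using
    h.dotProduct_pointY_ne_zero

lemma coeff_two_ne_zero : ℓ 2 ≠ 0 := by
  simpa only [dotProduct_vec3, mul_one, mul_zero, zero_add] using
    h.dotProduct_ne_zero h.mem_origin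

lemma dotProduct_ne_zero_of_same_row {x x' y : ℚ} (hx : ℓ ⬝ᵥ ![x, y, 1] = 0)
    (hne : x' ≠ x) : ℓ ⬝ᵥ ![x', y, 1] ≠ 0 := by
  rw [dotProduct_vec3] at hx ⊢
  intro hx'
  exact hne (mul_left_cancel₀ h.coeff_zero_ne_zero (by linear_combination hx' - hx))

lemma dotProduct_ne_zero_of_same_column {x y y' : ℚ} (hy : ℓ ⬝ᵥ ![x, y, 1] = 0)
    (hne : y' ≠ y) : ℓ ⬝ᵥ ![x, y', 1] ≠ 0 := by
  rw [dotProduct_vec3] at hy ⊢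
  intro hy'
  exact hne (mul_left_cancel₀ h.coeff_one_ne_zero (by linear_combination hy' - hy))

lemma mem_pointX : R ![1, 0, 0] :=
  h.mem_of_meet_eq_smul h.mem_origin h.mem_unitX h.mem_unitY h.mem_unitXY (k := -1)
    (by simp only [cross_vec3, smul_vec3]; norm_num) (by norm_num) h.dotProduct_pointX_ne_zero

lemma mem_pointY : R ![0, 1, 0] :=
  h.mem_of_meet_eq_smul h.mem_origin h.mem_unitY h.mem_unitX h.mem_unitXY (k := 1)
    (by simp only [cross_vec3, smul_vec3]; norm_num) one_ne_zero h.dotProduct_pointY_ne_zero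

lemma mem_center : R ![1 / 2, 1 / 2, 1] :=
  h.mem_of_meet_eq_smul h.mem_origin h.mem_unitXY h.mem_unitX h.mem_unitY (k := 2)
    (by simp only [cross_vec3, smul_vec3]; norm_num) two_ne_zero (by
      have := h.dotProduct_center_ne_zero
      rw [dotProduct_vec3] at this ⊢
      contrapose! this
      linear_combination 2 * this)

lemma isAbscissa_zero : IsAbscissa R 0 := ⟨0, h.mem_origin⟩

lemma isAbscissa_one : IsAbscissa R 1 := ⟨0, h.mem_unitX⟩

lemma isOrdinate_zero : IsOrdinate R 0 := ⟨0, h.mem_origin⟩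

lemma isOrdinate_one : IsOrdinate R 1 := ⟨0, h.mem_unitY⟩

lemma isOrdinate_half : IsOrdinate R (1 / 2) := ⟨1 / 2, h.mem_center⟩

lemma mem_of_isAbscissa_of_isOrdinate {x y : ℚ} (hx : IsAbscissa R x) (hy : IsOrdinate R y)
    (hxy : ℓ ⬝ᵥ ![x, y, 1] ≠ 0) : R ![x, y, 1] := by
  obtain ⟨y', hy'⟩ := hx
  obtain ⟨x', hx'⟩ := hy
  exact h.mem_of_meet_eq_smul hy' h.mem_pointY hx' h.mem_pointX (k := -1)
    (by simp only [cross_vec3, smul_vec3]; norm_num) (by norm_num) hxy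

lemma mem_of_collinear {p₁ p₂ q₁ q₂ r t : ℚ} (hp : R ![p₁, p₂, 1])
    (hq : R ![q₁, q₂, 1]) (hr : IsOrdinate R r) (hpq : p₂ ≠ q₂)
    (hcol : (t - p₁) * (q₂ - p₂) = (r - p₂) * (q₁ - p₁))
    (ht : ℓ ⬝ᵥ ![t, r, 1] ≠ 0) : R ![t, r, 1] := by
  obtain ⟨x, hx⟩ := hr
  refine h.mem_of_meet_eq_smul hp hq hx h.mem_pointX (k := p₂ - q₂) ?_ (sub_ne_zero.2 hpq) ht
  simp only [cross_vec3, smul_vec3, smul_eq_mul]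
  exact vec3_eq (by linear_combination hcol) (by ring) (by ring)

lemma isAbscissa_two : IsAbscissa R 2 := by
  by_cases hm : ℓ ⬝ᵥ ![1, 1 / 2, 1] = 0
  · -- `(1, 1/2)` is on the line, so use `(1/2, 1/4)`, where the line through `(1, 0)` and
    -- `(0, 1/2)` meets the column `x = 1/2`
    have hR : R ![0, 1 / 2, 1] := h.mem_of_isAbscissa_of_isOrdinate h.isAbscissa_zero
      h.isOrdinate_half (h.dotProduct_ne_zero_of_same_row hm (by norm_num))
    rw [dotProduct_vec3] at hm
    have hQ : R ![1 / 2, 1 / 4, 1] :=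
      h.mem_of_meet_eq_smul h.mem_unitX hR h.mem_center h.mem_pointY (k := -1)
        (by simp only [cross_vec3, smul_vec3]; norm_num) (by norm_num) (by
          rw [dotProduct_vec3]
          intro h0
          exact h.coeff_two_ne_zero (by linear_combination 2 * h0 - hm))
    refine ⟨1, h.mem_of_collinear h.mem_origin hQ h.isOrdinate_one (by norm_num) (by norm_num)
      ?_⟩
    rw [dotProduct_vec3]
    intro h0
    exact h.coeff_two_ne_zero (by linear_combination 2 * hm - h0)
  have hR : R ![1, 1 / 2, 1] :=
    h.mem_of_isAbscissa_of_isOrdinate h.isAbscissa_one h.isOrdinate_half hm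
  by_cases h21 : ℓ ⬝ᵥ ![2, 1, 1] = 0
  · exact ⟨0, h.mem_of_collinear h.mem_unitY hR h.isOrdinate_zero (by norm_num) (by norm_num)
      (h.dotProduct_ne_zero_of_same_column h21 (by norm_num))⟩
  · exact ⟨1, h.mem_of_collinear h.mem_origin hR h.isOrdinate_one (by norm_num) (by norm_num)
      h21⟩

lemma isOrdinate_two : IsOrdinate R 2 :=
  isOrdinate_iff_isAbscissa_swapXY.2 h.swap.isAbscissa_two

lemma isAbscissa_midpoint_of_rows {a b α β γ : ℚ} (ha : IsAbscissa R a) (hb : IsAbscissa R b)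
    (hα : IsOrdinate R α) (hβ : IsOrdinate R β) (hγ : IsOrdinate R γ) (hab : a ≠ b)
    (hαβ : α ≠ β) (hγ2 : 2 * γ = α + β) (hm : ℓ ⬝ᵥ ![(a + b) / 2, γ, 1] ≠ 0) :
    IsAbscissa R ((a + b) / 2) := by
  have join {c d : ℚ} (hc : IsAbscissa R c) (hd : IsAbscissa R d) (hcd : c + d = a + b)
      (hcα : ℓ ⬝ᵥ ![c, α, 1] ≠ 0) (hdβ : ℓ ⬝ᵥ ![d, β, 1] ≠ 0) :
      IsAbscissa R ((a + b) / 2) :=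
    ⟨γ, h.mem_of_collinear (h.mem_of_isAbscissa_of_isOrdinate hc hα hcα)
      (h.mem_of_isAbscissa_of_isOrdinate hd hβ hdβ) hγ hαβ
      (by linear_combination -(β - α) / 2 * hcd - (d - c) / 2 * hγ2) hm⟩
  -- the line `ℓ = 0` meets each row and each column at most once, so one of the segments from
  -- `(a, α)` to `(b, β)` and from `(b, α)` to `(a, β)` has both end points off it
  by_cases haα : ℓ ⬝ᵥ ![a, α, 1] = 0
  · exact join hb ha (add_comm b a) (h.dotProduct_ne_zero_of_same_row haα hab.symm)
      (h.dotProduct_ne_zero_of_same_column haα hαβ.symm)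
  by_cases hbβ : ℓ ⬝ᵥ ![b, β, 1] = 0
  · exact join hb ha (add_comm b a) (h.dotProduct_ne_zero_of_same_column hbβ hαβ)
      (h.dotProduct_ne_zero_of_same_row hbβ hab)
  exact join ha hb rfl haα hbβ

lemma isAbscissa_midpoint {a b : ℚ} (ha : IsAbscissa R a) (hb : IsAbscissa R b) :
    IsAbscissa R ((a + b) / 2) := by
  rcases eq_or_ne a b with rfl | hab
  · rwa [add_self_div_two]
  by_cases hm : ℓ ⬝ᵥ ![(a + b) / 2, 1 / 2, 1] = 0
  · exact h.isAbscissa_midpoint_of_rows ha hb h.isOrdinate_zero h.isOrdinate_two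
      h.isOrdinate_one hab (by norm_num) (by norm_num)
      (h.dotProduct_ne_zero_of_same_column hm (by norm_num))
  · exact h.isAbscissa_midpoint_of_rows ha hb h.isOrdinate_zero h.isOrdinate_one
      h.isOrdinate_half hab (by norm_num) (by norm_num) hm

lemma isAbscissa_two_mul {a : ℚ} (ha : IsAbscissa R a) : IsAbscissa R (2 * a) := by
  rcases eq_or_ne a 0 with rfl | ha0
  · simpa using h.isAbscissa_zero
  by_cases hhalf : ℓ ⬝ᵥ ![a, 1 / 2, 1] = 0
  · have hR : R ![a, 1, 1] := h.mem_of_isAbscissa_of_isOrdinate ha h.isOrdinate_one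
      (h.dotProduct_ne_zero_of_same_column hhalf (by norm_num))
    by_cases h2 : ℓ ⬝ᵥ ![2 * a, 2, 1] = 0
    · have hR' : R ![0, 2, 1] := h.mem_of_isAbscissa_of_isOrdinate h.isAbscissa_zero
        h.isOrdinate_two (h.dotProduct_ne_zero_of_same_row h2 (by simpa using ha0))
      exact ⟨0, h.mem_of_collinear hR' hR h.isOrdinate_zero (by norm_num) (by ring)
        (h.dotProduct_ne_zero_of_same_column h2 (by norm_num))⟩
    · exact ⟨2, h.mem_of_collinear h.mem_origin hR h.isOrdinate_two (by norm_num) (by ring) h2⟩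
  · have hR : R ![a, 1 / 2, 1] := h.mem_of_isAbscissa_of_isOrdinate ha h.isOrdinate_half hhalf
    by_cases h1 : ℓ ⬝ᵥ ![2 * a, 1, 1] = 0
    · exact ⟨0, h.mem_of_collinear h.mem_unitY hR h.isOrdinate_zero (by norm_num) (by ring)
        (h.dotProduct_ne_zero_of_same_column h1 (by norm_num))⟩
    · exact ⟨1, h.mem_of_collinear h.mem_origin hR h.isOrdinate_one (by norm_num) (by ring) h1⟩

lemma isAbscissa_add {a b : ℚ} (ha : IsAbscissa R a) (hb : IsAbscissa R b) :
    IsAbscissa R (a + b) := by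
  simpa [mul_div_cancel₀] using h.isAbscissa_two_mul (h.isAbscissa_midpoint ha hb)

lemma isOrdinate_add {a b : ℚ} (ha : IsOrdinate R a) (hb : IsOrdinate R b) :
    IsOrdinate R (a + b) :=
  isOrdinate_iff_isAbscissa_swapXY.2 <| h.swap.isAbscissa_add
    (isOrdinate_iff_isAbscissa_swapXY.1 ha) (isOrdinate_iff_isAbscissa_swapXY.1 hb)

lemma isOrdinate_natCast (n : ℕ) : IsOrdinate R n := by
  induction n with
  | zero => simpa using h.isOrdinate_zero
  | succ n ih => simpa using h.isOrdinate_add ih h.isOrdinate_one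

lemma isAbscissa_lineMap {p q s : ℚ} (hp : IsAbscissa R p) (hq : IsAbscissa R q)
    (hs : IsOrdinate R s) : IsAbscissa R (p + s * (q - p)) := by
  -- join `(p, n)` to `(q, n + 1)` and cut with the row `y = n + s`, for `n` so large that none
  -- of the three points is on the line `ℓ = 0`
  obtain ⟨n, hpn, hqn, htn⟩ := ((eventually_mul_natCast_add_ne_zero h.coeff_one_ne_zero
    (ℓ 0 * p + ℓ 2)).and ((eventually_mul_natCast_add_ne_zero h.coeff_one_ne_zero
    (ℓ 0 * q + ℓ 1 + ℓ 2)).and (eventually_mul_natCast_add_ne_zero h.coeff_one_ne_zero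
    (ℓ 0 * (p + s * (q - p)) + ℓ 1 * s + ℓ 2)))).exists
  have hP := h.mem_of_isAbscissa_of_isOrdinate hp (h.isOrdinate_natCast n)
    (by rw [dotProduct_vec3]; convert hpn using 1; ring)
  have hQ := h.mem_of_isAbscissa_of_isOrdinate hq (h.isOrdinate_add (h.isOrdinate_natCast n)
    h.isOrdinate_one) (by rw [dotProduct_vec3]; convert hqn using 1; ring)
  exact ⟨_, h.mem_of_collinear hP hQ (h.isOrdinate_add (h.isOrdinate_natCast n) hs)
    (by simp) (by ring) (by rw [dotProduct_vec3]; convert htn using 1; ring)⟩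

lemma isAbscissa_inv {g : ℚ} (hg : IsOrdinate R g) : IsAbscissa R g⁻¹ := by
  rcases eq_or_ne g 0 with rfl | hg0
  · simpa using h.isAbscissa_zero
  -- join `(0, n)` to `(1, n + g)` and cut with the row `y = n + 1`
  obtain ⟨n, h0n, h1n, htn⟩ := ((eventually_mul_natCast_add_ne_zero h.coeff_one_ne_zero
    (ℓ 2)).and ((eventually_mul_natCast_add_ne_zero h.coeff_one_ne_zero
    (ℓ 0 + ℓ 1 * g + ℓ 2)).and (eventually_mul_natCast_add_ne_zero h.coeff_one_ne_zero
    (ℓ 0 * g⁻¹ + ℓ 1 + ℓ 2)))).exists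
  have hP := h.mem_of_isAbscissa_of_isOrdinate h.isAbscissa_zero (h.isOrdinate_natCast n)
    (by rw [dotProduct_vec3]; convert h0n using 1; ring)
  have hQ := h.mem_of_isAbscissa_of_isOrdinate h.isAbscissa_one
    (h.isOrdinate_add (h.isOrdinate_natCast n) hg)
    (by rw [dotProduct_vec3]; convert h1n using 1; ring)
  exact ⟨_, h.mem_of_collinear hP hQ (h.isOrdinate_add (h.isOrdinate_natCast n) h.isOrdinate_one)
    (by simpa using hg0) (by field_simp; ring)
    (by rw [dotProduct_vec3]; convert htn using 1; ring)⟩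

lemma isAbscissa_of_isOrdinate {s : ℚ} (hs : IsOrdinate R s) : IsAbscissa R s := by
  simpa using h.isAbscissa_lineMap h.isAbscissa_zero h.isAbscissa_one hs

lemma isOrdinate_of_isAbscissa {x : ℚ} (hx : IsAbscissa R x) : IsOrdinate R x :=
  isOrdinate_iff_isAbscissa_swapXY.2 <|
    h.swap.isAbscissa_of_isOrdinate (isAbscissa_iff_isOrdinate_swapXY.1 hx)

lemma isAbscissa (x : ℚ) : IsAbscissa R x := by
  let F : Subfield ℚ :=
    { carrier := {x | IsAbscissa R x}
      zero_mem' := h.isAbscissa_zero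
      one_mem' := h.isAbscissa_one
      add_mem' := h.isAbscissa_add
      neg_mem' := fun {x} hx => by
        have := h.isAbscissa_lineMap hx h.isAbscissa_zero h.isOrdinate_two
        rwa [show x + 2 * (0 - x) = -x by ring] at this
      mul_mem' := fun {x y} hx hy => by
        simpa [mul_comm] using
          h.isAbscissa_lineMap h.isAbscissa_zero hx (h.isOrdinate_of_isAbscissa hy)
      inv_mem' := fun x hx => h.isAbscissa_inv (h.isOrdinate_of_isAbscissa hx) }
  exact (by simpa using SubfieldClass.ratCast_mem F x : x ∈ F)

lemma mem_of_dotProduct_ne_zero (e : Fin 3 → ℚ) (he : ℓ ⬝ᵥ e ≠ 0) : R e := by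
  have hR {x y : ℚ} (hxy : ℓ ⬝ᵥ ![x, y, 1] ≠ 0) : R ![x, y, 1] :=
    h.mem_of_isAbscissa_of_isOrdinate (h.isAbscissa x)
      (h.isOrdinate_of_isAbscissa (h.isAbscissa y)) hxy
  rw [vec3_dotProduct] at he
  by_cases he2 : e 2 = 0
  · -- a point at infinity: the meet of the line at infinity with the line through
    -- `n • (e 0, e 1)` and `(n + 1) • (e 0, e 1)`
    obtain ⟨n, hn, hn1⟩ := ((eventually_mul_natCast_add_ne_zero he (ℓ 2)).and
      (eventually_mul_natCast_add_ne_zero he (ℓ 0 * e 0 + ℓ 1 * e 1 + ℓ 2))).exists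
    refine h.mem_of_meet_eq_smul (hR (x := n * e 0) (y := n * e 1) ?_)
      (hR (x := (n + 1) * e 0) (y := (n + 1) * e 1) ?_) h.mem_pointX h.mem_pointY (k := 1) ?_
      one_ne_zero (by rwa [vec3_dotProduct])
    · rw [dotProduct_vec3]; convert hn using 1; rw [he2]; ring
    · rw [dotProduct_vec3]; convert hn1 using 1; rw [he2]; ring
    · simp only [cross_vec3, one_smul]
      ext i; fin_cases i <;> simp [he2] <;> ring
  · have := h.smul_mem (hR (x := e 0 / e 2) (y := e 1 / e 2) ?_) he2
    · convert this using 1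
      ext i; fin_cases i <;> simp [mul_div_cancel₀ _ he2]
    · rw [dotProduct_vec3]
      intro h0
      apply he
      field_simp at h0
      linear_combination h0

end FrameClosure

/-! ### The quadrangle `A, B, C, D` -/

/-- The projective map sending `[0:0:1], [1:0:1], [0:1:1], [1:1:1]` to `A`, `B`, `C` and
`α A + β B + γ C`, in homogeneous coordinates. -/
def frameMatrix (A B C : ℚ × ℚ) (α β γ : ℚ) : Matrix (Fin 3) (Fin 3) ℚ :=
  !![A.1, A.2, 1; B.1, B.2, 1; C.1, C.2, 1]ᵀ * !![α, α, -α; β, 0, 0; 0, γ, 0]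

section frameMatrix

variable (A B C : ℚ × ℚ) (α β γ : ℚ)

lemma frameMatrix_mulVec (x y z : ℚ) : frameMatrix A B C α β γ *ᵥ ![x, y, z] =
    (α * (x + y - z)) • hom A + (β * x) • hom B + (γ * y) • hom C := by
  rw [frameMatrix, ← mulVec_mulVec]
  ext i; fin_cases i <;> simp [mulVec, dotProduct, Fin.sum_univ_three, hom] <;> ring

lemma det_frameMatrix :
    (frameMatrix A B C α β γ).det = -(α * β * γ) * (hom A ⬝ᵥ hom B ⨯₃ hom C) := by
  simp [frameMatrix, det_fin_three, hom, cross_vec3]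
  ring

end frameMatrix

lemma frameClosure_frameMatrix {A B C D : ℚ × ℚ} {α β γ δ : ℚ}
    (hABC : hom A ⬝ᵥ hom B ⨯₃ hom C ≠ 0) (hα : α ≠ 0) (hβ : β ≠ 0)
    (hγ : γ ≠ 0) (hαβ : α + β ≠ 0) (hαγ : α + γ ≠ 0) (hβγ : β + γ ≠ 0)
    (hδ : δ ≠ 0) (hD : α • hom A + β • hom B + γ • hom C = δ • hom D) :
    FrameClosure (![0, 0, 1] ᵥ* frameMatrix A B C α β γ)
      (fun e => IsDerivableHom {emb A, emb B, emb C, emb D}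
        (frameMatrix A B C α β γ *ᵥ e)) := by
  have hS := isMeetClosed_isDerivableHom {emb A, emb B, emb C, emb D}
  have hmem {p : ℚ × ℚ} {k : ℚ}
      (hp : emb p ∈ ({emb A, emb B, emb C, emb D} : Set (ℝ × ℝ))) (hk : k ≠ 0) :=
    hS.smul_mem (isDerivableHom_hom hp) hk
  refine
    { toIsMeetClosed := hS.comp _ (by rw [det_frameMatrix]; simp [*])
      mem_origin := ?_, mem_unitX := ?_, mem_unitY := ?_, mem_unitXY := ?_
      dotProduct_pointX_ne_zero := ?_, dotProduct_pointY_ne_zero := ?_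
      dotProduct_center_ne_zero := ?_ } <;>
    simp only [← dotProduct_mulVec, frameMatrix_mulVec]
  · simpa using hmem (p := A) (by simp) (neg_ne_zero.2 hα)
  · simpa using hmem (p := B) (by simp) hβ
  · simpa using hmem (p := C) (by simp) hγ
  · simpa [hD] using hmem (p := D) (by simp) hδ
  · simpa [hom] using hαβ
  · simpa [hom] using hαγ
  · norm_num [hom, hβγ]

lemma sDeriv_emb_of_frame {A B C D : ℚ × ℚ} {α β γ δ : ℚ}
    (hABC : hom A ⬝ᵥ hom B ⨯₃ hom C ≠ 0) (hα : α ≠ 0) (hβ : β ≠ 0)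
    (hγ : γ ≠ 0) (hαβ : α + β ≠ 0) (hαγ : α + γ ≠ 0) (hβγ : β + γ ≠ 0)
    (hδ : δ ≠ 0) (hD : α • hom A + β • hom B + γ • hom C = δ • hom D)
    (p : ℚ × ℚ) : SDeriv {emb A, emb B, emb C, emb D} (emb p) := by
  set M := frameMatrix A B C α β γ
  have hM : M *ᵥ (M⁻¹ *ᵥ hom p) = hom p := by
    rw [mulVec_mulVec, mul_nonsing_inv _ (Ne.isUnit (by rw [det_frameMatrix]; simp [*])),
      one_mulVec]
  have hR := frameClosure_frameMatrix hABC hα hβ hγ hαβ hαγ hβγ hδ hD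
  have := hR.mem_of_dotProduct_ne_zero (M⁻¹ *ᵥ hom p) (by
    rw [← dotProduct_mulVec, hM]
    simp [hom])
  obtain ⟨-, hp⟩ : IsDerivableHom _ (hom p) := hM ▸ this
  rwa [dehom_hom] at hp

end Straightedge

open Straightedge

theorem rational_points_derivable (A B C D : ℚ × ℚ)
    (hdist : List.Pairwise (· ≠ ·) [A, B, C, D])
    (hcol : ∀ s : Set (ℝ × ℝ), s ⊆ {emb A, emb B, emb C, emb D} → s.ncard = 3 →
      ¬ Collinear ℝ s)
    (hABCD : ¬ QParallel (B - A) (D - C))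
    (hADBC : ¬ QParallel (D - A) (C - B))
    (hACBD : ¬ QParallel (C - A) (D - B)) :
    Dense {p | SDeriv {emb A, emb B, emb C, emb D} p} ∧
    ∀ p : ℚ × ℚ, SDeriv {emb A, emb B, emb C, emb D} (emb p) := by
  obtain ⟨⟨hAB, hAC, hAD⟩, ⟨hBC, hBD⟩, hCD⟩ :
      (A ≠ B ∧ A ≠ C ∧ A ≠ D) ∧ (B ≠ C ∧ B ≠ D) ∧ C ≠ D := by
    simpa using hdist
  have hdet {p q r : ℚ × ℚ} := @dotProduct_cross_ne_zero _ hcol p q r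
  -- the coefficients of `D` in terms of `A, B, C`, by Cramer's rule
  have key := sDeriv_emb_of_frame (hdet hAB hAC hBC) (hdet hBD.symm hCD.symm hBC)
    (hdet hAD hAC hCD.symm) (hdet hAB hAD hBD)
    (fun h0 => hABCD (by simp [QParallel, hom, cross_vec3] at h0 ⊢; linear_combination -h0))
    (fun h0 => hACBD (by simp [QParallel, hom, cross_vec3] at h0 ⊢; linear_combination h0))
    (fun h0 => hADBC (by simp [QParallel, hom, cross_vec3] at h0 ⊢; linear_combination h0))
    (hdet hAB hAC hBC) (cramer_fin_three _ _ _ _)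
  exact ⟨(Rat.denseRange_cast.prodMap Rat.denseRange_cast).mono
    (by rintro _ ⟨p, rfl⟩; exact key p), key⟩
end

section
/- If a point P = (x, y) is derivable by straightedge-and-compass operations from a finite set S of points whose coordinates lie in a subfield F of ℝ, then x and y lie in a field obtained from F by a finite tower of extensions each of degree at most 2. -/
noncomputable def euclDist (p q : ℝ × ℝ) : ℝ :=
  Real.sqrt ((p.1 - q.1) ^ 2 + (p.2 - q.2) ^ 2)

def circleSet (c : ℝ × ℝ) (r : ℝ) : Set (ℝ × ℝ) := {p | euclDist p c = r}

/-- Straightedge-and-compass derivability of points from an initial point set `S`: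
one may add intersection points of two distinct lines through derived points, of a line
and a circle, or of two distinct circles (circles centered at derived points, with radii
equal to distances between derived points). -/
inductive RCDeriv (S : Set (ℝ × ℝ)) : ℝ × ℝ → Prop
  | base {p : ℝ × ℝ} : p ∈ S → RCDeriv S p
  | ll {a b c d p : ℝ × ℝ} : RCDeriv S a → RCDeriv S b → RCDeriv S c → RCDeriv S d →
      a ≠ b → c ≠ d → lineThrough a b ≠ lineThrough c d →
      p ∈ lineThrough a b → p ∈ lineThrough c d → RCDeriv S p
  | lc {a b c d e p : ℝ × ℝ} : RCDeriv S a → RCDeriv S b → RCDeriv S c → RCDeriv S d →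
      RCDeriv S e → a ≠ b →
      p ∈ lineThrough a b → p ∈ circleSet c (euclDist d e) → RCDeriv S p
  | cc {c₁ c₂ d₁ e₁ d₂ e₂ p : ℝ × ℝ} : RCDeriv S c₁ → RCDeriv S c₂ → RCDeriv S d₁ →
      RCDeriv S e₁ → RCDeriv S d₂ → RCDeriv S e₂ →
      circleSet c₁ (euclDist d₁ e₁) ≠ circleSet c₂ (euclDist d₂ e₂) →
      p ∈ circleSet c₁ (euclDist d₁ e₁) → p ∈ circleSet c₂ (euclDist d₂ e₂) →
      RCDeriv S p
/-!
A tower of quadratic steps over `F` is encoded by a sequence `a` with `aᵢ² ∈ F(a₀, …, aᵢ₋₁)`.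
Two such sequences can be spliced into one, so the reals lying in some tower form a field, and
appending one more term shows that this field contains every `s` with `s²` in it. Any subfield `T`
of `ℝ` with that property contains the coordinates of all points derivable from points over `T`:
two non-parallel lines over `T` meet at a parameter that is a quotient of cross products, and
intersecting a circle over `T` with a line over `T` (or with a second circle, after subtracting the
two equations) means solving a quadratic equation over `T`.
-/

open IntermediateField Polynomial Set

section SqrtTower

variable {K L : Type*} [Field K] [Field L] [Algebra K L]

theorem finrank_adjoin_simple_le_two_of_sq_mem {a : L} (ha : a ^ 2 ∈ (algebraMap K L).range) :
    FiniteDimensional K K⟮a⟯ ∧ Module.finrank K K⟮a⟯ ≤ 2 := by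
  obtain ⟨b, hb⟩ := ha
  have hroot : aeval a (X ^ 2 - C b) = 0 := by simp [hb]
  have hint : IsIntegral K a := ⟨X ^ 2 - C b, monic_X_pow_sub_C b two_ne_zero, hroot⟩
  have hdeg := minpoly.degree_le_of_ne_zero K a (X_pow_sub_C_ne_zero two_pos b) hroot
  rw [degree_X_pow_sub_C two_pos] at hdeg
  exact ⟨adjoin.finiteDimensional hint, adjoin.finrank hint ▸ natDegree_le_of_degree_le hdeg⟩

variable (K) in
def adjoinPrefix (a : ℕ → L) (n : ℕ) : IntermediateField K L := adjoin K (a '' Iio n)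

variable (K) in
def IsSqrtSeq (a : ℕ → L) : Prop := ∀ i, a i ^ 2 ∈ adjoinPrefix K a i

def splice (a : ℕ → L) (n : ℕ) (b : ℕ → L) : ℕ → L := fun i => if i < n then a i else b (i - n)

variable {a b : ℕ → L}

theorem adjoinPrefix_zero (a : ℕ → L) : adjoinPrefix K a 0 = ⊥ := by
  simp [adjoinPrefix]

theorem adjoinPrefix_mono (a : ℕ → L) : Monotone (adjoinPrefix K a) :=
  fun _ _ h => adjoin.mono _ _ _ (image_mono (Iio_subset_Iio h))

theorem adjoinPrefix_le_succ (a : ℕ → L) (i : ℕ) :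
    adjoinPrefix K a i ≤ adjoinPrefix K a (i + 1) :=
  adjoinPrefix_mono a i.le_succ

theorem apply_mem_adjoinPrefix (a : ℕ → L) {i n : ℕ} (h : i < n) : a i ∈ adjoinPrefix K a n :=
  subset_adjoin _ _ (mem_image_of_mem a h)

theorem extendScalars_adjoinPrefix_succ (a : ℕ → L) (i : ℕ) :
    extendScalars (adjoinPrefix_le_succ (K := K) a i) = adjoin (adjoinPrefix K a i) {a i} := by
  apply restrictScalars_injective K
  rw [extendScalars_restrictScalars]
  unfold adjoinPrefix
  rw [adjoin_adjoin_left, ← Order.succ_eq_add_one, Order.Iio_succ, ← Iio_insert, image_insert_eq,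
    union_singleton]

theorem IsSqrtSeq.finrank_step_le_two (ha : IsSqrtSeq K a) (i : ℕ) :
    FiniteDimensional (adjoinPrefix K a i) (extendScalars (adjoinPrefix_le_succ (K := K) a i)) ∧
      Module.finrank (adjoinPrefix K a i)
        (extendScalars (adjoinPrefix_le_succ (K := K) a i)) ≤ 2 := by
  rw [extendScalars_adjoinPrefix_succ]
  exact finrank_adjoin_simple_le_two_of_sq_mem ⟨⟨_, ha i⟩, rfl⟩

theorem adjoinPrefix_splice_of_le {n i : ℕ} (h : i ≤ n) :
    adjoinPrefix K (splice a n b) i = adjoinPrefix K a i := by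
  unfold adjoinPrefix
  congr 1
  exact image_congr fun j hj => if_pos (lt_of_lt_of_le hj h)

theorem adjoinPrefix_le_adjoinPrefix_splice (n j : ℕ) :
    adjoinPrefix K b j ≤ adjoinPrefix K (splice a n b) (n + j) := by
  refine adjoin.mono _ _ _ ?_
  rintro _ ⟨k, hk, rfl⟩
  exact ⟨n + k, by simpa using hk, by simp [splice]⟩

theorem isSqrtSeq_splice {n : ℕ} (ha : IsSqrtSeq K a)
    (hb : ∀ j, b j ^ 2 ∈ adjoinPrefix K (splice a n b) (n + j)) : IsSqrtSeq K (splice a n b) := by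
  intro i
  by_cases hi : i < n
  · rw [adjoinPrefix_splice_of_le hi.le, splice, if_pos hi]
    exact ha i
  · obtain ⟨j, rfl⟩ := Nat.exists_eq_add_of_le (not_lt.1 hi)
    simpa [splice] using hb j

theorem IsSqrtSeq.exists_common_refinement (ha : IsSqrtSeq K a) (hb : IsSqrtSeq K b) (n m : ℕ) :
    ∃ c, IsSqrtSeq K c ∧ adjoinPrefix K a n ≤ adjoinPrefix K c (n + m) ∧
      adjoinPrefix K b m ≤ adjoinPrefix K c (n + m) :=
  ⟨splice a n b, isSqrtSeq_splice ha fun j => adjoinPrefix_le_adjoinPrefix_splice n j (hb j),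
    (adjoinPrefix_splice_of_le le_rfl).symm.le.trans (adjoinPrefix_mono _ (n.le_add_right m)),
    adjoinPrefix_le_adjoinPrefix_splice n m⟩

theorem IsSqrtSeq.exists_mem_of_sq_mem {s : L} {n : ℕ} (ha : IsSqrtSeq K a)
    (hs : s ^ 2 ∈ adjoinPrefix K a n) : ∃ c, IsSqrtSeq K c ∧ s ∈ adjoinPrefix K c (n + 1) := by
  have hn : adjoinPrefix K (splice a n fun _ => s) n = adjoinPrefix K a n :=
    adjoinPrefix_splice_of_le le_rfl
  refine ⟨splice a n fun _ => s, isSqrtSeq_splice ha fun j => ?_, ?_⟩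
  · exact adjoinPrefix_mono _ (n.le_add_right j) (hn ▸ hs)
  · simpa [splice] using apply_mem_adjoinPrefix (K := K) (splice a n fun _ => s) n.lt_succ_self

variable (K L) in
def sqrtClosure : IntermediateField K L where
  carrier := {x | ∃ a, IsSqrtSeq K a ∧ ∃ n, x ∈ adjoinPrefix K a n}
  mul_mem' := by
    rintro x y ⟨a, ha, n, hx⟩ ⟨b, hb, m, hy⟩
    obtain ⟨c, hc, hac, hbc⟩ := ha.exists_common_refinement hb n m
    exact ⟨c, hc, n + m, mul_mem (hac hx) (hbc hy)⟩
  add_mem' := by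
    rintro x y ⟨a, ha, n, hx⟩ ⟨b, hb, m, hy⟩
    obtain ⟨c, hc, hac, hbc⟩ := ha.exists_common_refinement hb n m
    exact ⟨c, hc, n + m, add_mem (hac hx) (hbc hy)⟩
  algebraMap_mem' r := ⟨0, fun _ => by simp [zero_mem], 0, IntermediateField.algebraMap_mem _ r⟩
  inv_mem' := by
    rintro x ⟨a, ha, n, hx⟩
    exact ⟨a, ha, n, inv_mem hx⟩

theorem mem_sqrtClosure_of_sq_mem {s : L} (hs : s ^ 2 ∈ sqrtClosure K L) :
    s ∈ sqrtClosure K L := by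
  obtain ⟨a, ha, n, hs⟩ := hs
  obtain ⟨c, hc, hsc⟩ := ha.exists_mem_of_sq_mem hs
  exact ⟨c, hc, n + 1, hsc⟩

end SqrtTower

section QuadraticEquations

variable {L : Type*} [Field L] {T : Subfield L}

theorem Subfield.mem_of_quadratic_eq_zero [NeZero (2 : L)] (hT : ∀ s, s ^ 2 ∈ T → s ∈ T)
    {A B C t : L} (hA : A ≠ 0) (hAT : A ∈ T) (hBT : B ∈ T) (hCT : C ∈ T)
    (ht : A * t ^ 2 + B * t + C = 0) : t ∈ T := by
  have hsq : (2 * A * t + B) ^ 2 = B ^ 2 - 4 * A * C := by linear_combination 4 * A * ht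
  have hroot : 2 * A * t + B ∈ T :=
    hT _ (hsq ▸ by apply_rules [sub_mem, pow_mem, mul_mem, ofNat_mem, -hT])
  rw [show t = (2 * A * t + B - B) / (2 * A) by field_simp; ring]
  apply_rules [div_mem, sub_mem, mul_mem, ofNat_mem, -hT]

variable [LinearOrder L] [IsStrictOrderedRing L]

theorem sq_add_sq_ne_zero_of_ne_zero {u : L × L} (hu : u ≠ 0) : u.1 ^ 2 + u.2 ^ 2 ≠ 0 := by
  contrapose! hu
  obtain ⟨h₁, h₂⟩ := (add_eq_zero_iff_of_nonneg (sq_nonneg _) (sq_nonneg _)).1 hu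
  exact Prod.ext (pow_eq_zero_iff two_ne_zero |>.1 h₁) (pow_eq_zero_iff two_ne_zero |>.1 h₂)

theorem Subfield.mem_of_line_inter_circle (hT : ∀ s, s ^ 2 ∈ T → s ∈ T)
    {α β γ c₁ c₂ r x y : L} (hαβ : (α, β) ≠ 0) (hα : α ∈ T) (hβ : β ∈ T) (hγ : γ ∈ T)
    (hc₁ : c₁ ∈ T) (hc₂ : c₂ ∈ T) (hr : r ∈ T) (hline : α * x + β * y = γ)
    (hcirc : (x - c₁) ^ 2 + (y - c₂) ^ 2 = r) : x ∈ T ∧ y ∈ T := by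
  have hy : y ∈ T := by
    refine mem_of_quadratic_eq_zero hT (sq_add_sq_ne_zero_of_ne_zero hαβ)
      (B := -2 * β * (γ - α * c₁) - 2 * α ^ 2 * c₂)
      (C := (γ - α * c₁) ^ 2 + α ^ 2 * c₂ ^ 2 - α ^ 2 * r)
      (by apply_rules [add_mem, pow_mem, -hT])
      (by apply_rules [sub_mem, mul_mem, neg_mem, pow_mem, ofNat_mem, -hT])
      (by apply_rules [sub_mem, add_mem, mul_mem, pow_mem, -hT]) ?_
    linear_combination α ^ 2 * hcirc + (-(α * x) - γ + β * y + 2 * α * c₁) * hline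
  refine ⟨mem_of_quadratic_eq_zero hT one_ne_zero (B := -2 * c₁)
    (C := c₁ ^ 2 + (y - c₂) ^ 2 - r) (one_mem T) (by apply_rules [mul_mem, neg_mem, ofNat_mem, -hT])
    (by apply_rules [sub_mem, add_mem, pow_mem, -hT]) ?_, hy⟩
  linear_combination hcirc

end QuadraticEquations

def cross (u v : ℝ × ℝ) : ℝ := u.1 * v.2 - u.2 * v.1

theorem cross_eq_zero_of_cross_eq_zero {u v w : ℝ × ℝ} (hu : u ≠ 0) (huv : cross u v = 0)
    (huw : cross u w = 0) : cross v w = 0 := by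
  unfold cross at huv huw
  have h : cross v w • u = 0 := by
    ext
    · simp only [cross, Prod.smul_fst, smul_eq_mul, Prod.fst_zero]
      linear_combination v.1 * huw - w.1 * huv
    · simp only [cross, Prod.smul_snd, smul_eq_mul, Prod.snd_zero]
      linear_combination v.2 * huw - w.2 * huv
  exact (smul_eq_zero.1 h).resolve_right hu

theorem mem_lineThrough_iff_cross {a b p : ℝ × ℝ} (hab : a ≠ b) :
    p ∈ lineThrough a b ↔ cross (b - a) (p - a) = 0 := by
  have hu := sq_add_sq_ne_zero_of_ne_zero (sub_ne_zero.2 hab.symm)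
  constructor
  · rintro ⟨t, rfl⟩
    simp only [cross, Prod.fst_sub, Prod.snd_sub, Prod.fst_add, Prod.snd_add, Prod.smul_fst,
      Prod.smul_snd, smul_eq_mul]
    ring
  · intro h
    -- the parameter of the orthogonal projection of `p` onto the line
    refine ⟨((p - a).1 * (b - a).1 + (p - a).2 * (b - a).2) / ((b - a).1 ^ 2 + (b - a).2 ^ 2), ?_⟩
    simp only [cross, Prod.fst_sub, Prod.snd_sub] at h hu ⊢
    ext
    · simp only [Prod.fst_add, Prod.smul_fst, Prod.fst_sub, smul_eq_mul]
      field_simp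
      linear_combination -(b.2 - a.2) * h
    · simp only [Prod.snd_add, Prod.smul_snd, Prod.snd_sub, smul_eq_mul]
      field_simp
      linear_combination (b.1 - a.1) * h

theorem lineThrough_eq_of_cross_eq_zero {a b c d p : ℝ × ℝ} (hab : a ≠ b) (hcd : c ≠ d)
    (hpab : p ∈ lineThrough a b) (hpcd : p ∈ lineThrough c d) (h : cross (b - a) (d - c) = 0) :
    lineThrough a b = lineThrough c d := by
  rw [mem_lineThrough_iff_cross hab] at hpab
  rw [mem_lineThrough_iff_cross hcd] at hpcd
  ext q
  have hq₁ : cross (b - a) (q - a) = cross (b - a) (q - p) := by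
    simp only [cross, Prod.fst_sub, Prod.snd_sub] at hpab ⊢
    linear_combination hpab
  have hq₂ : cross (d - c) (q - c) = cross (d - c) (q - p) := by
    simp only [cross, Prod.fst_sub, Prod.snd_sub] at hpcd ⊢
    linear_combination hpcd
  have h' : cross (d - c) (b - a) = 0 := by
    simp only [cross] at h ⊢
    linear_combination -h
  rw [mem_lineThrough_iff_cross hab, mem_lineThrough_iff_cross hcd, hq₁, hq₂]
  exact ⟨cross_eq_zero_of_cross_eq_zero (sub_ne_zero.2 hab.symm) h,
    cross_eq_zero_of_cross_eq_zero (sub_ne_zero.2 hcd.symm) h'⟩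

theorem sq_euclDist (p q : ℝ × ℝ) : euclDist p q ^ 2 = (p.1 - q.1) ^ 2 + (p.2 - q.2) ^ 2 :=
  Real.sq_sqrt (by positivity)

theorem sq_sub_add_sq_sub_of_mem_circleSet {c p : ℝ × ℝ} {r : ℝ} (hp : p ∈ circleSet c r) :
    (p.1 - c.1) ^ 2 + (p.2 - c.2) ^ 2 = r ^ 2 := by
  rw [← sq_euclDist, show euclDist p c = r from hp]

section Coordinates

variable {T : Subfield ℝ} {a b c d p : ℝ × ℝ}

theorem sq_euclDist_mem (ha : a ∈ (T : Set ℝ) ×ˢ (T : Set ℝ))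
    (hb : b ∈ (T : Set ℝ) ×ˢ (T : Set ℝ)) : euclDist a b ^ 2 ∈ T := by
  rw [sq_euclDist]
  apply_rules [sub_mem, add_mem, pow_mem, ha.1, ha.2, hb.1, hb.2]

theorem mem_prod_of_mem_lineThrough_inter (ha : a ∈ (T : Set ℝ) ×ˢ (T : Set ℝ))
    (hb : b ∈ (T : Set ℝ) ×ˢ (T : Set ℝ)) (hc : c ∈ (T : Set ℝ) ×ˢ (T : Set ℝ))
    (hd : d ∈ (T : Set ℝ) ×ˢ (T : Set ℝ)) (hab : a ≠ b) (hcd : c ≠ d)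
    (hne : lineThrough a b ≠ lineThrough c d) (hpab : p ∈ lineThrough a b)
    (hpcd : p ∈ lineThrough c d) : p ∈ (T : Set ℝ) ×ˢ (T : Set ℝ) := by
  have hD : cross (b - a) (d - c) ≠ 0 := fun h =>
    hne (lineThrough_eq_of_cross_eq_zero hab hcd hpab hpcd h)
  obtain ⟨t, rfl⟩ := hpab
  have ht : t = cross (c - a) (d - c) / cross (b - a) (d - c) := by
    have h := (mem_lineThrough_iff_cross hcd).1 hpcd
    rw [eq_div_iff hD]
    simp only [cross, Prod.fst_sub, Prod.snd_sub, Prod.fst_add, Prod.snd_add, Prod.smul_fst,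
      Prod.smul_snd, smul_eq_mul] at h ⊢
    linear_combination -h
  have htT : t ∈ T := by
    rw [ht]
    simp only [cross, Prod.fst_sub, Prod.snd_sub]
    apply_rules [div_mem, sub_mem, mul_mem, ha.1, ha.2, hb.1, hb.2, hc.1, hc.2, hd.1, hd.2]
  constructor
  · simp only [Prod.fst_add, Prod.smul_fst, Prod.fst_sub, smul_eq_mul]
    apply_rules [sub_mem, add_mem, mul_mem, ha.1, hb.1]
  · simp only [Prod.snd_add, Prod.smul_snd, Prod.snd_sub, smul_eq_mul]
    apply_rules [sub_mem, add_mem, mul_mem, ha.2, hb.2]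

theorem mem_prod_of_mem_lineThrough_inter_circleSet (hT : ∀ s, s ^ 2 ∈ T → s ∈ T) {r : ℝ}
    (ha : a ∈ (T : Set ℝ) ×ˢ (T : Set ℝ)) (hb : b ∈ (T : Set ℝ) ×ˢ (T : Set ℝ))
    (hc : c ∈ (T : Set ℝ) ×ˢ (T : Set ℝ)) (hr : r ^ 2 ∈ T) (hab : a ≠ b)
    (hpab : p ∈ lineThrough a b) (hpc : p ∈ circleSet c r) : p ∈ (T : Set ℝ) ×ˢ (T : Set ℝ) := by
  have hline := (mem_lineThrough_iff_cross hab).1 hpab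
  simp only [cross, Prod.fst_sub, Prod.snd_sub] at hline
  have hu : (b.2 - a.2, -(b.1 - a.1)) ≠ 0 := by
    intro h
    apply hab
    simp only [Prod.ext_iff, Prod.fst_zero, Prod.snd_zero, neg_eq_zero, sub_eq_zero] at h
    exact Prod.ext h.2.symm h.1.symm
  exact T.mem_of_line_inter_circle hT hu (γ := (b.2 - a.2) * a.1 - (b.1 - a.1) * a.2)
    (by apply_rules [sub_mem, ha.2, hb.2, -hT]) (by apply_rules [neg_mem, sub_mem, ha.1, hb.1, -hT])
    (by apply_rules [sub_mem, mul_mem, ha.1, ha.2, hb.1, hb.2, -hT]) hc.1 hc.2 hr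
    (by linear_combination -hline) (sq_sub_add_sq_sub_of_mem_circleSet hpc)

theorem mem_prod_of_mem_circleSet_inter (hT : ∀ s, s ^ 2 ∈ T → s ∈ T) {c₁ c₂ : ℝ × ℝ}
    {r₁ r₂ : ℝ} (hc₁ : c₁ ∈ (T : Set ℝ) ×ˢ (T : Set ℝ)) (hc₂ : c₂ ∈ (T : Set ℝ) ×ˢ (T : Set ℝ))
    (hr₁ : r₁ ^ 2 ∈ T) (hr₂ : r₂ ^ 2 ∈ T) (hne : circleSet c₁ r₁ ≠ circleSet c₂ r₂)
    (hp₁ : p ∈ circleSet c₁ r₁) (hp₂ : p ∈ circleSet c₂ r₂) : p ∈ (T : Set ℝ) ×ˢ (T : Set ℝ) := by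
  have hc : c₂ - c₁ ≠ 0 := by
    intro h
    rw [sub_eq_zero] at h
    subst h
    exact hne (by rw [show r₁ = r₂ from hp₁.symm.trans hp₂])
  have hcirc₁ := sq_sub_add_sq_sub_of_mem_circleSet hp₁
  have hcirc₂ := sq_sub_add_sq_sub_of_mem_circleSet hp₂
  -- subtracting the two circle equations leaves the radical axis
  exact T.mem_of_line_inter_circle hT hc
    (γ := (r₁ ^ 2 - r₂ ^ 2 + c₂.1 ^ 2 + c₂.2 ^ 2 - c₁.1 ^ 2 - c₁.2 ^ 2) / 2)
    (by apply_rules [sub_mem, hc₁.1, hc₂.1, -hT]) (by apply_rules [sub_mem, hc₁.2, hc₂.2, -hT])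
    (by apply_rules [div_mem, sub_mem, add_mem, pow_mem, ofNat_mem, hc₁.1, hc₁.2, hc₂.1, hc₂.2,
      -hT])
    hc₁.1 hc₁.2 hr₁ (by linear_combination (hcirc₁ - hcirc₂) / 2) hcirc₁

theorem RCDeriv.mem_prod (hT : ∀ s, s ^ 2 ∈ T → s ∈ T) {S : Set (ℝ × ℝ)}
    (hS : S ⊆ (T : Set ℝ) ×ˢ (T : Set ℝ)) (h : RCDeriv S p) : p ∈ (T : Set ℝ) ×ˢ (T : Set ℝ) := by
  induction h with
  | base hp => exact hS hp
  | ll _ _ _ _ hab hcd hne hpab hpcd iha ihb ihc ihd =>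
    exact mem_prod_of_mem_lineThrough_inter iha ihb ihc ihd hab hcd hne hpab hpcd
  | lc _ _ _ _ _ hab hpab hpc iha ihb ihc ihd ihe =>
    exact mem_prod_of_mem_lineThrough_inter_circleSet hT iha ihb ihc (sq_euclDist_mem ihd ihe)
      hab hpab hpc
  | cc _ _ _ _ _ _ hne hp₁ hp₂ ihc₁ ihc₂ ihd₁ ihe₁ ihd₂ ihe₂ =>
    exact mem_prod_of_mem_circleSet_inter hT ihc₁ ihc₂ (sq_euclDist_mem ihd₁ ihe₁)
      (sq_euclDist_mem ihd₂ ihe₂) hne hp₁ hp₂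

end Coordinates

theorem rcderiv_coords_in_quadratic_tower_general (F : Subfield ℝ) (S : Set (ℝ × ℝ))
    (hS : ∀ p ∈ S, p.1 ∈ F ∧ p.2 ∈ F)
    (x y : ℝ) (h : RCDeriv S (x, y)) :
    ∃ (n : ℕ) (G : ℕ → IntermediateField F ℝ) (hle : ∀ i, G i ≤ G (i + 1)),
      G 0 = ⊥ ∧
      (∀ i, FiniteDimensional (G i) (IntermediateField.extendScalars (hle i)) ∧
        Module.finrank (G i) (IntermediateField.extendScalars (hle i)) ≤ 2) ∧
      x ∈ G n ∧ y ∈ G n := by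
  set T := (sqrtClosure F ℝ).toSubfield
  have hST : S ⊆ (T : Set ℝ) ×ˢ (T : Set ℝ) := fun p hp =>
    ⟨IntermediateField.algebraMap_mem (sqrtClosure F ℝ) ⟨p.1, (hS p hp).1⟩,
      IntermediateField.algebraMap_mem (sqrtClosure F ℝ) ⟨p.2, (hS p hp).2⟩⟩
  obtain ⟨⟨a, ha, n, hx⟩, ⟨b, hb, m, hy⟩⟩ :=
    RCDeriv.mem_prod (fun _ => mem_sqrtClosure_of_sq_mem) hST h
  obtain ⟨c, hc, hac, hbc⟩ := ha.exists_common_refinement hb n m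
  exact ⟨n + m, adjoinPrefix F c, adjoinPrefix_le_succ c, adjoinPrefix_zero c,
    hc.finrank_step_le_two, hac hx, hbc hy⟩

theorem rcderiv_coords_in_quadratic_tower (F : Subfield ℝ) (S : Set (ℝ × ℝ))
    (hfin : S.Finite) (hS : ∀ p ∈ S, p.1 ∈ F ∧ p.2 ∈ F)
    (x y : ℝ) (h : RCDeriv S (x, y)) :
    ∃ (n : ℕ) (G : ℕ → IntermediateField F ℝ) (hle : ∀ i, G i ≤ G (i + 1)),
      G 0 = ⊥ ∧
      (∀ i, FiniteDimensional (G i) (IntermediateField.extendScalars (hle i)) ∧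
        Module.finrank (G i) (IntermediateField.extendScalars (hle i)) ≤ 2) ∧
      x ∈ G n ∧ y ∈ G n :=
  rcderiv_coords_in_quadratic_tower_general F S hS x y h
end
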